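/- Green function difference L² bound in d = 2: if G : ℤ² × ℤ² → ℝ is the lattice Green function (defined up to additive constants, with well-defined gradient) satisfying |∇(G(y,x) − G(y,0))| ≲ |x|/(1+|y|)² for |y| ≥ 2|x| and |∇(G(y,x) − G(y,0))| ≲ (1+|x−y|)^{-1} + (1+|y|)^{-1} for |y| ≤ 2|x|, then ‖∇G(·,x) − ∇G(·,0)‖_{L²(ℤ²)} ≲ sqrt(log(1+|x|)) for all x ∈ ℤ². -/

import Mathlib

/-- Euclidean norm of a lattice point of `ℤ²`. -/
noncomputable def latNorm (v : Fin 2 → ℤ) : ℝ :=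
  Real.sqrt (∑ i, ((v i : ℝ)) ^ 2)

/-- Euclidean norm of a vector of `ℝ²`. -/
noncomputable def vecNorm (v : Fin 2 → ℝ) : ℝ :=
  Real.sqrt (∑ i, (v i) ^ 2)

/-- Discrete forward gradient in the first variable of `G(·, x)`. -/
noncomputable def gradG (G : (Fin 2 → ℤ) → (Fin 2 → ℤ) → ℝ)
    (y x : Fin 2 → ℤ) : Fin 2 → ℝ :=
  fun i => G (y + Pi.single i 1) x - G y x

namespace GreenAux

lemma latNorm_nonneg (v : Fin 2 → ℤ) : 0 ≤ latNorm v := Real.sqrt_nonneg _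

lemma abs_coord_le (v : Fin 2 → ℤ) (i : Fin 2) : |((v i : ℝ))| ≤ latNorm v := by
  rw [← Real.sqrt_sq_eq_abs]
  apply Real.sqrt_le_sqrt
  exact Finset.single_le_sum (f := fun j => ((v j : ℝ))^2) (fun j _ => by positivity)
    (Finset.mem_univ i)

lemma natAbs_coord_le (v : Fin 2 → ℤ) (i : Fin 2) : (((v i).natAbs : ℝ)) ≤ latNorm v := by
  have := abs_coord_le v i
  rw [Nat.cast_natAbs, Int.cast_abs]
  exact this

lemma latNorm_le_add (v : Fin 2 → ℤ) : latNorm v ≤ |((v 0 : ℝ))| + |((v 1 : ℝ))| := by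
  rw [latNorm, Fin.sum_univ_two]
  have h : ((v 0 : ℝ))^2 + ((v 1:ℝ))^2 ≤ (|((v 0 : ℝ))| + |((v 1 : ℝ))|)^2 := by
    nlinarith [abs_nonneg ((v 0:ℝ)), abs_nonneg ((v 1:ℝ)), sq_abs ((v 0:ℝ)), sq_abs ((v 1:ℝ)),
      mul_nonneg (abs_nonneg ((v 0:ℝ))) (abs_nonneg ((v 1:ℝ)))]
  calc Real.sqrt (((v 0:ℝ))^2 + ((v 1:ℝ))^2) ≤ Real.sqrt ((|((v 0 : ℝ))| + |((v 1 : ℝ))|)^2) :=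
        Real.sqrt_le_sqrt h
    _ = |((v 0 : ℝ))| + |((v 1 : ℝ))| := Real.sqrt_sq (by positivity)

lemma fold (φ : ℕ → ℝ) (N : ℕ) :
    ∑ a ∈ Finset.Icc (-(N:ℤ)) N, φ a.natAbs = φ 0 + 2 * ∑ k ∈ Finset.Icc 1 N, φ k := by
  induction N with
  | zero => simp
  | succ n ih =>
    have h1 : Finset.Icc (-((n+1:ℕ):ℤ)) ((n+1:ℕ):ℤ)
        = insert (-((n+1:ℕ):ℤ)) (insert (((n+1:ℕ):ℤ)) (Finset.Icc (-(n:ℤ)) (n:ℤ))) := by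
      ext a
      simp only [Finset.mem_Icc, Finset.mem_insert]
      push_cast
      omega
    have h2 : (-((n+1:ℕ):ℤ)) ∉ insert (((n+1:ℕ):ℤ)) (Finset.Icc (-(n:ℤ)) (n:ℤ)) := by
      simp only [Finset.mem_insert, Finset.mem_Icc]
      push_cast
      omega
    have h3 : (((n+1:ℕ):ℤ)) ∉ Finset.Icc (-(n:ℤ)) (n:ℤ) := by
      simp only [Finset.mem_Icc]
      push_cast
      omega
    rw [h1, Finset.sum_insert h2, Finset.sum_insert h3, ih,
      Finset.sum_Icc_succ_top (by omega : 1 ≤ n + 1)]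
    have e1 : ((-((n+1:ℕ):ℤ))).natAbs = n+1 := by omega
    have e2 : ((((n+1:ℕ):ℤ))).natAbs = n+1 := by omega
    rw [e1, e2]
    ring


lemma sum_psi (ψ : ℕ → ℝ) (hψ : ∀ n, 0 ≤ ψ n) (N : ℕ) (S : Finset (Fin 2 → ℤ))
    (hS : ∀ y ∈ S, (y 0).natAbs ≤ N ∧ (y 1).natAbs ≤ N) :
    ∑ y ∈ S, ψ (max (y 0).natAbs (y 1).natAbs)
      ≤ 2 * (ψ 0 + 2 * ∑ k ∈ Finset.Icc 1 N, ((2*k+1 : ℕ) : ℝ) * ψ k) := by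
  classical
  set T : Finset (ℤ × ℤ) :=
    ((Finset.Icc (-(N:ℤ)) N) ×ˢ (Finset.Icc (-(N:ℤ)) N)).filter
      (fun p => p.2.natAbs ≤ p.1.natAbs) with hT
  -- value of the T-sum
  have hTsum : ∑ p ∈ T, ψ p.1.natAbs
      = ψ 0 + 2 * ∑ k ∈ Finset.Icc 1 N, ((2*k+1 : ℕ) : ℝ) * ψ k := by
    rw [hT, Finset.sum_filter, Finset.sum_product]
    have hrow : ∀ a ∈ Finset.Icc (-(N:ℤ)) N,
        (∑ b ∈ Finset.Icc (-(N:ℤ)) N, if b.natAbs ≤ a.natAbs then ψ a.natAbs else 0)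
          = ((2*a.natAbs+1 : ℕ) : ℝ) * ψ a.natAbs := by
      intro a ha
      rw [Finset.mem_Icc] at ha
      rw [← Finset.sum_filter]
      have hfe : (Finset.Icc (-(N:ℤ)) N).filter (fun b => b.natAbs ≤ a.natAbs)
          = Finset.Icc (-(a.natAbs:ℤ)) (a.natAbs:ℤ) := by
        ext b
        simp only [Finset.mem_filter, Finset.mem_Icc]
        omega
      rw [hfe, Finset.sum_const, Int.card_Icc]
      have : ((a.natAbs:ℤ) + 1 - (-(a.natAbs:ℤ))).toNat = 2*a.natAbs+1 := by omega
      rw [this, nsmul_eq_mul]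
    rw [Finset.sum_congr rfl hrow]
    have hf := fold (fun k => ((2*k+1 : ℕ) : ℝ) * ψ k) N
    rw [hf]
    norm_num
  -- split S
  have hsplit := Finset.sum_filter_add_sum_filter_not S
    (fun y => (y 1).natAbs ≤ (y 0).natAbs) (fun y => ψ (max (y 0).natAbs (y 1).natAbs))
  have hpart1 : ∑ y ∈ S.filter (fun y => (y 1).natAbs ≤ (y 0).natAbs),
      ψ (max (y 0).natAbs (y 1).natAbs) ≤ ∑ p ∈ T, ψ p.1.natAbs := by
    have he : ∀ y ∈ S.filter (fun y => (y 1).natAbs ≤ (y 0).natAbs),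
        ψ (max (y 0).natAbs (y 1).natAbs) = ψ ((y 0, y 1).1.natAbs) := by
      intro y hy
      rw [Finset.mem_filter] at hy
      rw [max_eq_left hy.2]
    rw [Finset.sum_congr rfl he]
    rw [← Finset.sum_image (f := fun p : ℤ × ℤ => ψ p.1.natAbs)
      (g := fun y : Fin 2 → ℤ => (y 0, y 1)) ?hinj]
    case hinj =>
      intro y _ z _ h
      funext i
      fin_cases i
      · exact congrArg Prod.fst h
      · exact congrArg Prod.snd h
    apply Finset.sum_le_sum_of_subset_of_nonneg
    · intro p hp
      rw [Finset.mem_image] at hp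
      obtain ⟨y, hy, rfl⟩ := hp
      rw [Finset.mem_filter] at hy
      obtain ⟨hyS, hcond⟩ := hy
      obtain ⟨h0, h1⟩ := hS y hyS
      rw [hT, Finset.mem_filter, Finset.mem_product, Finset.mem_Icc, Finset.mem_Icc]
      refine ⟨⟨⟨?_, ?_⟩, ?_, ?_⟩, ?_⟩ <;> omega
    · intro _ _ _
      exact hψ _
  have hpart2 : ∑ y ∈ S.filter (fun y => ¬ (y 1).natAbs ≤ (y 0).natAbs),
      ψ (max (y 0).natAbs (y 1).natAbs) ≤ ∑ p ∈ T, ψ p.1.natAbs := by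
    have he : ∀ y ∈ S.filter (fun y => ¬ (y 1).natAbs ≤ (y 0).natAbs),
        ψ (max (y 0).natAbs (y 1).natAbs) = ψ ((y 1, y 0).1.natAbs) := by
      intro y hy
      rw [Finset.mem_filter] at hy
      rw [max_eq_right (le_of_lt (lt_of_not_ge hy.2))]
    rw [Finset.sum_congr rfl he]
    rw [← Finset.sum_image (f := fun p : ℤ × ℤ => ψ p.1.natAbs)
      (g := fun y : Fin 2 → ℤ => (y 1, y 0)) ?hinj]
    case hinj =>
      intro y _ z _ h
      funext i
      fin_cases i
      · exact congrArg Prod.snd h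
      · exact congrArg Prod.fst h
    apply Finset.sum_le_sum_of_subset_of_nonneg
    · intro p hp
      rw [Finset.mem_image] at hp
      obtain ⟨y, hy, rfl⟩ := hp
      rw [Finset.mem_filter] at hy
      obtain ⟨hyS, hcond⟩ := hy
      obtain ⟨h0, h1⟩ := hS y hyS
      rw [hT, Finset.mem_filter, Finset.mem_product, Finset.mem_Icc, Finset.mem_Icc]
      refine ⟨⟨⟨?_, ?_⟩, ?_, ?_⟩, ?_⟩ <;> omega
    · intro _ _ _
      exact hψ _
  calc ∑ y ∈ S, ψ (max (y 0).natAbs (y 1).natAbs)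
      = _ + _ := hsplit.symm
    _ ≤ ∑ p ∈ T, ψ p.1.natAbs + ∑ p ∈ T, ψ p.1.natAbs := add_le_add hpart1 hpart2
    _ = 2 * ∑ p ∈ T, ψ p.1.natAbs := by ring
    _ = _ := by rw [hTsum]


lemma harm (N : ℕ) : ∑ k ∈ Finset.Icc 1 N, (1 + (k:ℝ))⁻¹ ≤ Real.log (N+1) := by
  induction N with
  | zero => simp
  | succ n ih =>
    rw [Finset.sum_Icc_succ_top (by omega : 1 ≤ n + 1)]
    have h1 : (0:ℝ) < (n:ℝ)+1 := by positivity
    have h2 : (0:ℝ) < (n:ℝ)+2 := by positivity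
    have key : ((n:ℝ)+2)⁻¹ ≤ Real.log (((n:ℝ)+2)/((n:ℝ)+1)) := by
      rw [Real.le_log_iff_exp_le (by positivity), le_div_iff₀ h1]
      have h3 := Real.add_one_le_exp (-(((n:ℝ)+2)⁻¹))
      have h4 : Real.exp (-(((n:ℝ)+2)⁻¹)) * Real.exp (((n:ℝ)+2)⁻¹) = 1 := by
        rw [← Real.exp_add]; simp
      have h5 : (0:ℝ) < Real.exp (((n:ℝ)+2)⁻¹) := Real.exp_pos _
      have hs : (((n:ℝ)+2)⁻¹) * ((n:ℝ)+2) = 1 := inv_mul_cancel₀ (ne_of_gt h2)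
      nlinarith [mul_le_mul_of_nonneg_right h3 h5.le]
    have hlog : Real.log (((n:ℝ)+2)/((n:ℝ)+1))
        = Real.log ((n:ℝ)+2) - Real.log ((n:ℝ)+1) :=
      Real.log_div (ne_of_gt h2) (ne_of_gt h1)
    push_cast
    push_cast at ih
    rw [hlog] at key
    rw [show (1 + ((n:ℝ)+1))⁻¹ = ((n:ℝ)+2)⁻¹ by ring_nf,
      show ((n:ℝ)+1+1) = ((n:ℝ)+2) by ring]
    linarith

lemma cube (u : ℝ) (hu : 1 ≤ u) : (u^3)⁻¹ ≤ 2*(u^2)⁻¹ - 2*((u+1)^2)⁻¹ := by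
  have h1 : (0:ℝ) < u := by linarith
  have h2 : (0:ℝ) < u+1 := by linarith
  have he : 2*(u^2)⁻¹ - 2*((u+1)^2)⁻¹ = (2*(u+1)^2 - 2*u^2)/(u^2*(u+1)^2) := by
    field_simp
  rw [he, inv_eq_one_div, div_le_div_iff₀ (by positivity) (by positivity)]
  have hu2 : 1 ≤ u^2 := by nlinarith
  have h3 : (0:ℝ) ≤ u^2*(3*u^2-1) := mul_nonneg (sq_nonneg u) (by linarith)
  nlinarith [h3]

lemma tele (M N : ℕ) : ∑ k ∈ Finset.Icc M N, ((1+(k:ℝ))^3)⁻¹ ≤ 2*((1+(M:ℝ))^2)⁻¹ := by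
  have aux : ∀ J : ℕ, ∑ k ∈ Finset.Icc M (M+J), ((1+(k:ℝ))^3)⁻¹
      ≤ 2*((1+(M:ℝ))^2)⁻¹ - 2*((1+(M:ℝ)+(J:ℝ)+1)^2)⁻¹ := by
    intro J
    induction J with
    | zero =>
      rw [Nat.add_zero, Finset.Icc_self, Finset.sum_singleton]
      have := cube (1+(M:ℝ)) (by linarith [Nat.cast_nonneg (α := ℝ) M])
      push_cast
      convert this using 3 <;> ring
    | succ j ihj =>
      rw [show M + (j+1) = (M+j)+1 from rfl, Finset.sum_Icc_succ_top (by omega)]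
      have hc := cube (1+(M:ℝ)+(j:ℝ)+1)
        (by linarith [Nat.cast_nonneg (α := ℝ) M, Nat.cast_nonneg (α := ℝ) j])
      have e1 : ((((M+j)+1 : ℕ)):ℝ) = (M:ℝ)+(j:ℝ)+1 := by push_cast; ring
      rw [e1]
      have e2 : (1+((M:ℝ)+(j:ℝ)+1))^3 = (1+(M:ℝ)+(j:ℝ)+1)^3 := by ring
      have e3 : (1+(M:ℝ)+((j:ℝ)+1)+1)^2 = ((1+(M:ℝ)+(j:ℝ)+1)+1)^2 := by ring
      push_cast
      rw [show (1+((M:ℝ)+(j:ℝ)+1))^3 = (1+(M:ℝ)+(j:ℝ)+1)^3 by ring,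
        show (1+(M:ℝ)+((j:ℝ)+1)+1)^2 = ((1+(M:ℝ)+(j:ℝ)+1)+1)^2 by ring]
      push_cast at ihj
      linarith
  rcases le_or_gt M N with h | h
  · obtain ⟨J, rfl⟩ := Nat.exists_eq_add_of_le h
    have h1 := aux J
    have h2 : (0:ℝ) ≤ 2*((1+(M:ℝ)+(J:ℝ)+1)^2)⁻¹ := by positivity
    linarith
  · rw [Finset.Icc_eq_empty (by omega)]
    simp
    positivity


lemma max_cast_le (y : Fin 2 → ℤ) :
    ((max (y 0).natAbs (y 1).natAbs : ℕ) : ℝ) ≤ latNorm y := by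
  rw [Nat.cast_max]
  exact max_le (natAbs_coord_le y 0) (natAbs_coord_le y 1)

lemma sumB (N : ℕ) (S : Finset (Fin 2 → ℤ))
    (hS : ∀ y ∈ S, (y 0).natAbs ≤ N ∧ (y 1).natAbs ≤ N) :
    ∑ y ∈ S, ((1 + latNorm y)^2)⁻¹ ≤ 2 + 8 * Real.log (N+1) := by
  set ψ : ℕ → ℝ := fun n => ((1+(n:ℝ))^2)⁻¹ with hψdef
  have hψ : ∀ n, 0 ≤ ψ n := fun n => by positivity
  have hpt : ∀ y ∈ S, ((1 + latNorm y)^2)⁻¹ ≤ ψ (max (y 0).natAbs (y 1).natAbs) := by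
    intro y _
    have h1 := max_cast_le y
    have h2 : (0:ℝ) < 1 + ((max (y 0).natAbs (y 1).natAbs : ℕ) : ℝ) := by positivity
    apply inv_anti₀ (by positivity)
    have : (1:ℝ) + ((max (y 0).natAbs (y 1).natAbs : ℕ) : ℝ) ≤ 1 + latNorm y := by linarith
    exact pow_le_pow_left₀ (by positivity) this 2
  have h1 : ∑ y ∈ S, ((1 + latNorm y)^2)⁻¹
      ≤ ∑ y ∈ S, ψ (max (y 0).natAbs (y 1).natAbs) := Finset.sum_le_sum hpt
  have h2 := sum_psi ψ hψ N S hS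
  have h3 : ∑ k ∈ Finset.Icc 1 N, ((2*k+1 : ℕ) : ℝ) * ψ k
      ≤ ∑ k ∈ Finset.Icc 1 N, 2 * (1+(k:ℝ))⁻¹ := by
    apply Finset.sum_le_sum
    intro k _
    have hk : (0:ℝ) < 1 + (k:ℝ) := by positivity
    rw [hψdef]
    have e : ((2*k+1 : ℕ) : ℝ) * ((1+(k:ℝ))^2)⁻¹ = ((2*k+1 : ℕ) : ℝ) / (1+(k:ℝ))^2 := by
      rw [div_eq_mul_inv]
    rw [e, show (2:ℝ) * (1+(k:ℝ))⁻¹ = 2 / (1+(k:ℝ)) by rw [div_eq_mul_inv],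
      div_le_div_iff₀ (by positivity) hk]
    push_cast
    nlinarith
  have h4 : ∑ k ∈ Finset.Icc 1 N, 2 * (1+(k:ℝ))⁻¹ = 2 * ∑ k ∈ Finset.Icc 1 N, (1+(k:ℝ))⁻¹ := by
    rw [Finset.mul_sum]
  have h5 := harm N
  have hψ0 : ψ 0 = 1 := by rw [hψdef]; norm_num
  calc ∑ y ∈ S, ((1 + latNorm y)^2)⁻¹
      ≤ 2 * (ψ 0 + 2 * ∑ k ∈ Finset.Icc 1 N, ((2*k+1 : ℕ) : ℝ) * ψ k) := le_trans h1 h2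
    _ ≤ 2 * (1 + 2 * (2 * Real.log (N+1))) := by
        rw [hψ0]
        have : ∑ k ∈ Finset.Icc 1 N, ((2*k+1 : ℕ) : ℝ) * ψ k ≤ 2 * Real.log (N+1) := by
          rw [← h4] at *
          calc _ ≤ _ := h3
            _ = 2 * ∑ k ∈ Finset.Icc 1 N, (1+(k:ℝ))⁻¹ := by rw [Finset.mul_sum]
            _ ≤ 2 * Real.log (N+1) := by linarith
        linarith
    _ = 2 + 8 * Real.log (N+1) := by ring

lemma sumC (M N : ℕ) (S : Finset (Fin 2 → ℤ))
    (hS : ∀ y ∈ S, (y 0).natAbs ≤ N ∧ (y 1).natAbs ≤ N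
      ∧ M ≤ max (y 0).natAbs (y 1).natAbs) :
    ∑ y ∈ S, ((1 + latNorm y)^4)⁻¹ ≤ 18 * ((1+(M:ℝ))^2)⁻¹ := by
  classical
  set ψ : ℕ → ℝ := fun n => if M ≤ n then ((1+(n:ℝ))^4)⁻¹ else 0 with hψdef
  have hψ : ∀ n, 0 ≤ ψ n := fun n => by
    rw [hψdef]
    dsimp only
    split <;> positivity
  have hpt : ∀ y ∈ S, ((1 + latNorm y)^4)⁻¹ ≤ ψ (max (y 0).natAbs (y 1).natAbs) := by
    intro y hy
    have hM := (hS y hy).2.2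
    rw [hψdef]
    dsimp only
    rw [if_pos hM]
    have h1 := max_cast_le y
    apply inv_anti₀ (by positivity)
    apply pow_le_pow_left₀ (by positivity)
    linarith
  have h1 : ∑ y ∈ S, ((1 + latNorm y)^4)⁻¹
      ≤ ∑ y ∈ S, ψ (max (y 0).natAbs (y 1).natAbs) :=
    Finset.sum_le_sum hpt
  have h2 := sum_psi ψ hψ N (S := S) (fun y hy => ⟨(hS y hy).1, (hS y hy).2.1⟩)
  have hψ0 : ψ 0 ≤ ((1+(M:ℝ))^2)⁻¹ := by
    rw [hψdef]
    dsimp only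
    split
    · have hM0 : M = 0 := by omega
      subst hM0
      norm_num
    · positivity
  have h3 : ∑ k ∈ Finset.Icc 1 N, ((2*k+1 : ℕ) : ℝ) * ψ k
      ≤ ∑ k ∈ Finset.Icc 1 N, (if M ≤ k then 2 * ((1+(k:ℝ))^3)⁻¹ else 0) := by
    apply Finset.sum_le_sum
    intro k _
    rw [hψdef]
    dsimp only
    split
    · rw [show ((2*k+1 : ℕ) : ℝ) * ((1+(k:ℝ))^4)⁻¹ = ((2*k+1 : ℕ) : ℝ) / (1+(k:ℝ))^4 by
        rw [div_eq_mul_inv],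
        show (2:ℝ) * ((1+(k:ℝ))^3)⁻¹ = 2 / (1+(k:ℝ))^3 by rw [div_eq_mul_inv],
        div_le_div_iff₀ (by positivity) (by positivity)]
      push_cast
      have hk3 : (0:ℝ) ≤ (1+(k:ℝ))^3 := by positivity
      nlinarith [mul_le_mul_of_nonneg_right
        (show (2*(k:ℝ)+1) ≤ 2*(1+(k:ℝ)) by linarith) hk3]
    · simp
  have h4 : ∑ k ∈ Finset.Icc 1 N, (if M ≤ k then 2 * ((1+(k:ℝ))^3)⁻¹ else 0)
      ≤ 2 * (2*((1+(M:ℝ))^2)⁻¹) := by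
    rw [← Finset.sum_filter]
    have hsub : (Finset.Icc 1 N).filter (fun k => M ≤ k) ⊆ Finset.Icc M N := by
      intro k hk
      simp only [Finset.mem_filter, Finset.mem_Icc] at hk ⊢
      omega
    calc ∑ k ∈ (Finset.Icc 1 N).filter (fun k => M ≤ k), 2 * ((1+(k:ℝ))^3)⁻¹
        ≤ ∑ k ∈ Finset.Icc M N, 2 * ((1+(k:ℝ))^3)⁻¹ :=
          Finset.sum_le_sum_of_subset_of_nonneg hsub (fun k _ _ => by positivity)
      _ = 2 * ∑ k ∈ Finset.Icc M N, ((1+(k:ℝ))^3)⁻¹ := by rw [Finset.mul_sum]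
      _ ≤ 2 * (2*((1+(M:ℝ))^2)⁻¹) := by
          have := tele M N
          linarith
  calc ∑ y ∈ S, ((1 + latNorm y)^4)⁻¹
      ≤ 2 * (ψ 0 + 2 * ∑ k ∈ Finset.Icc 1 N, ((2*k+1 : ℕ) : ℝ) * ψ k) := le_trans h1 h2
    _ ≤ 2 * (((1+(M:ℝ))^2)⁻¹ + 2 * (2 * (2*((1+(M:ℝ))^2)⁻¹))) := by
        have := le_trans h3 h4
        nlinarith
    _ = 18 * ((1+(M:ℝ))^2)⁻¹ := by ring


lemma vecNorm_nonneg (v : Fin 2 → ℝ) : 0 ≤ vecNorm v := Real.sqrt_nonneg _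

end GreenAux

open GreenAux in
theorem green_difference_L2_dim_two
    (G : (Fin 2 → ℤ) → (Fin 2 → ℤ) → ℝ) (C : ℝ) (hC : 0 < C)
    (hfar : ∀ x y : Fin 2 → ℤ, 2 * latNorm x ≤ latNorm y →
      vecNorm (gradG G y x - gradG G y 0) ≤ C * latNorm x / (1 + latNorm y) ^ 2)
    (hnear : ∀ x y : Fin 2 → ℤ, latNorm y ≤ 2 * latNorm x →
      vecNorm (gradG G y x - gradG G y 0)
        ≤ C * ((1 + latNorm (x - y))⁻¹ + (1 + latNorm y)⁻¹)) :
    ∃ C' : ℝ, 0 < C' ∧ ∀ x : Fin 2 → ℤ,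
      Real.sqrt (∑' y : Fin 2 → ℤ, vecNorm (gradG G y x - gradG G y 0) ^ 2)
        ≤ C' * Real.sqrt (Real.log (1 + latNorm x)) := by
  classical
  have key : ∀ x : Fin 2 → ℤ, ∀ S : Finset (Fin 2 → ℤ),
      ∑ y ∈ S, vecNorm (gradG G y x - gradG G y 0) ^ 2
        ≤ 144 * C^2 * Real.log (1 + latNorm x) := by
    intro x S
    by_cases hx : x = 0
    · subst hx
      have hz : ∀ y ∈ S, vecNorm (gradG G y 0 - gradG G y 0) ^ 2 = 0 := by
        intro y _
        rw [sub_self]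
        simp [vecNorm]
      rw [Finset.sum_congr rfl hz, Finset.sum_const_zero]
      have hlog : (0:ℝ) ≤ Real.log (1 + latNorm 0) :=
        Real.log_nonneg (by linarith [latNorm_nonneg 0])
      exact mul_nonneg (by positivity) hlog
    · set X := latNorm x with hXdef
      have hX0 : 0 ≤ X := latNorm_nonneg x
      have hX1 : 1 ≤ X := by
        obtain ⟨i, hi⟩ := Function.ne_iff.mp hx
        have hi' : x i ≠ 0 := by simpa using hi
        have h1 : (1:ℤ) ≤ |x i| := Int.one_le_abs hi'
        have h2 : (1:ℝ) ≤ |((x i : ℤ) : ℝ)| := by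
          rw [← Int.cast_abs]
          exact_mod_cast h1
        exact le_trans h2 (abs_coord_le x i)
      set L := Real.log (1 + X) with hLdef
      have hL : Real.log 2 ≤ L := Real.log_le_log (by norm_num) (by linarith)
      have hL2 : 1 ≤ 2 * L := by
        have := Real.log_two_gt_d9
        linarith
      have hL0 : 0 ≤ L := by linarith
      -- coordinate bounds helper
      have coordR : ∀ (y : Fin 2 → ℤ) (i : Fin 2), (((y i).natAbs : ℝ)) ≤ latNorm y :=
        natAbs_coord_le
      rw [← Finset.sum_filter_add_sum_filter_not S (fun y => 2 * X ≤ latNorm y)]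
      -- far part
      have hfarsum : ∑ y ∈ S.filter (fun y => 2 * X ≤ latNorm y),
          vecNorm (gradG G y x - gradG G y 0) ^ 2 ≤ 36 * C^2 * L := by
        set S1 := S.filter (fun y => 2 * X ≤ latNorm y) with hS1def
        set NS := S1.sup (fun y => max (y 0).natAbs (y 1).natAbs) with hNSdef
        set M := ⌈X⌉₊ with hMdef
        have hpt : ∀ y ∈ S1, vecNorm (gradG G y x - gradG G y 0) ^ 2
            ≤ C^2 * X^2 * ((1 + latNorm y)^4)⁻¹ := by
          intro y hy
          rw [hS1def, Finset.mem_filter] at hy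
          have hb := hfar x y hy.2
          have h0 := vecNorm_nonneg (gradG G y x - gradG G y 0)
          calc vecNorm (gradG G y x - gradG G y 0) ^ 2
              ≤ (C * X / (1 + latNorm y)^2)^2 := pow_le_pow_left₀ h0 hb 2
            _ = C^2 * X^2 * ((1 + latNorm y)^4)⁻¹ := by
                rw [div_pow, mul_pow, ← pow_mul, div_eq_mul_inv]
        have hsC : ∑ y ∈ S1, ((1 + latNorm y)^4)⁻¹ ≤ 18 * ((1+(M:ℝ))^2)⁻¹ := by
          apply sumC M NS
          intro y hy
          have hmax : max (y 0).natAbs (y 1).natAbs ≤ NS :=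
            Finset.le_sup (f := fun y => max (y 0).natAbs (y 1).natAbs) hy
          have hcond : 2 * X ≤ latNorm y := by
            rw [hS1def, Finset.mem_filter] at hy
            exact hy.2
          have hlt : latNorm y ≤ ((y 0).natAbs : ℝ) + ((y 1).natAbs : ℝ) := by
            have := latNorm_le_add y
            rw [Nat.cast_natAbs, Nat.cast_natAbs, Int.cast_abs, Int.cast_abs]
            exact this
          have hmx : X ≤ ((max (y 0).natAbs (y 1).natAbs : ℕ) : ℝ) := by
            rw [Nat.cast_max]
            have h1 : ((y 0).natAbs : ℝ) ≤ max ((y 0).natAbs : ℝ) ((y 1).natAbs : ℝ) :=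
              le_max_left _ _
            have h2 : ((y 1).natAbs : ℝ) ≤ max ((y 0).natAbs : ℝ) ((y 1).natAbs : ℝ) :=
              le_max_right _ _
            linarith
          have hMle : M ≤ max (y 0).natAbs (y 1).natAbs := Nat.ceil_le.mpr hmx
          exact ⟨le_trans (le_max_left _ _) hmax, le_trans (le_max_right _ _) hmax, hMle⟩
        have hXM : X ≤ 1 + (M:ℝ) := by
          have := Nat.le_ceil X
          rw [← hMdef] at this
          linarith
        have hsq : X^2 * ((1+(M:ℝ))^2)⁻¹ ≤ 1 := by
          rw [← div_eq_mul_inv]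
          apply div_le_one_of_le₀
          · exact pow_le_pow_left₀ hX0 hXM 2
          · positivity
        calc ∑ y ∈ S1, vecNorm (gradG G y x - gradG G y 0) ^ 2
            ≤ ∑ y ∈ S1, C^2 * X^2 * ((1 + latNorm y)^4)⁻¹ := Finset.sum_le_sum hpt
          _ = C^2 * X^2 * ∑ y ∈ S1, ((1 + latNorm y)^4)⁻¹ := by rw [Finset.mul_sum]
          _ ≤ C^2 * X^2 * (18 * ((1+(M:ℝ))^2)⁻¹) := by
              apply mul_le_mul_of_nonneg_left hsC (by positivity)
          _ = 18 * C^2 * (X^2 * ((1+(M:ℝ))^2)⁻¹) := by ring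
          _ ≤ 18 * C^2 * 1 := by
              apply mul_le_mul_of_nonneg_left hsq (by positivity)
          _ ≤ 36 * C^2 * L := by nlinarith [sq_nonneg C, hC]
      -- near part
      have hnearsum : ∑ y ∈ S.filter (fun y => ¬ 2 * X ≤ latNorm y),
          vecNorm (gradG G y x - gradG G y 0) ^ 2 ≤ 96 * C^2 * L := by
        set S2 := S.filter (fun y => ¬ 2 * X ≤ latNorm y) with hS2def
        have hmem : ∀ y ∈ S2, latNorm y ≤ 2 * X := by
          intro y hy
          rw [hS2def, Finset.mem_filter] at hy
          exact le_of_lt (lt_of_not_ge hy.2)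
        have hpt : ∀ y ∈ S2, vecNorm (gradG G y x - gradG G y 0) ^ 2
            ≤ 2*C^2*((1 + latNorm (x - y))^2)⁻¹ + 2*C^2*((1 + latNorm y)^2)⁻¹ := by
          intro y hy
          have hb := hnear x y (hmem y hy)
          have h0 := vecNorm_nonneg (gradG G y x - gradG G y 0)
          have hsq : vecNorm (gradG G y x - gradG G y 0) ^ 2
              ≤ (C * ((1 + latNorm (x - y))⁻¹ + (1 + latNorm y)⁻¹))^2 :=
            pow_le_pow_left₀ h0 hb 2
          set p := (1 + latNorm (x - y))⁻¹
          set q := (1 + latNorm y)⁻¹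
          have h2 : (C * (p + q))^2 ≤ 2*C^2*p^2 + 2*C^2*q^2 := by
            nlinarith [sq_nonneg (C*(p - q))]
          have e1 : p^2 = ((1 + latNorm (x - y))^2)⁻¹ := by rw [← inv_pow]
          have e2 : q^2 = ((1 + latNorm y)^2)⁻¹ := by rw [← inv_pow]
          rw [← e1, ← e2]
          linarith
        have hq : ∑ y ∈ S2, ((1 + latNorm y)^2)⁻¹ ≤ 20 * L := by
          set N1 := ⌊2*X⌋₊ with hN1def
          have hb := sumB N1 S2 ?coords
          case coords =>
            intro y hy
            constructor <;>
            · apply Nat.le_floor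
              calc (((y _).natAbs : ℝ)) ≤ latNorm y := coordR y _
                _ ≤ 2 * X := hmem y hy
          have hlog1 : Real.log ((N1:ℝ)+1) ≤ 2 * L := by
            have hfl : (N1:ℝ) ≤ 2*X := Nat.floor_le (by positivity)
            have h1 : (N1:ℝ)+1 ≤ (1+X)^2 := by nlinarith
            calc Real.log ((N1:ℝ)+1) ≤ Real.log ((1+X)^2) := Real.log_le_log (by positivity) h1
              _ = 2 * L := by rw [Real.log_pow]; push_cast; ring
          calc ∑ y ∈ S2, ((1 + latNorm y)^2)⁻¹ ≤ 2 + 8 * Real.log ((N1:ℝ)+1) := hb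
            _ ≤ 2 + 8 * (2*L) := by linarith
            _ ≤ 20 * L := by linarith
        have hp : ∑ y ∈ S2, ((1 + latNorm (x - y))^2)⁻¹ ≤ 28 * L := by
          set N2 := ⌊3*X⌋₊ with hN2def
          have hinj : ∀ a ∈ S2, ∀ b ∈ S2, x - a = x - b → a = b := by
            intro a _ b _ h
            have := congrArg (fun v => x - v) h
            simpa [sub_sub_cancel] using this
          have him : ∑ y ∈ S2, ((1 + latNorm (x - y))^2)⁻¹
              = ∑ z ∈ S2.image (fun y => x - y), ((1 + latNorm z)^2)⁻¹ :=
            (Finset.sum_image (f := fun z => ((1 + latNorm z)^2)⁻¹)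
              (g := fun y => x - y) hinj).symm
          rw [him]
          have hb := sumB N2 (S2.image (fun y => x - y)) ?coords2
          case coords2 =>
            intro z hz
            rw [Finset.mem_image] at hz
            obtain ⟨y, hy, rfl⟩ := hz
            have hbd : ∀ i : Fin 2, (((x - y) i).natAbs : ℝ) ≤ 3 * X := by
              intro i
              have e : ((x - y) i : ℤ) = x i - y i := by simp
              rw [Nat.cast_natAbs, Int.cast_abs, e]
              push_cast
              have h1 : |((x i : ℤ) : ℝ) - ((y i : ℤ) : ℝ)| ≤ |((x i : ℤ):ℝ)| + |((y i:ℤ):ℝ)| :=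
                abs_sub _ _
              have h2 : |((x i : ℤ):ℝ)| ≤ X := abs_coord_le x i
              have h3 : |((y i : ℤ):ℝ)| ≤ latNorm y := abs_coord_le y i
              have h4 := hmem y hy
              linarith
            constructor <;>
            · apply Nat.le_floor
              exact hbd _
          have hlog2 : Real.log ((N2:ℝ)+1) ≤ 3 * L := by
            have hfl : (N2:ℝ) ≤ 3*X := Nat.floor_le (by positivity)
            have h1 : (N2:ℝ)+1 ≤ (1+X)^3 := by
              nlinarith [sq_nonneg X, mul_nonneg (mul_nonneg hX0 hX0) hX0]
            calc Real.log ((N2:ℝ)+1) ≤ Real.log ((1+X)^3) := Real.log_le_log (by positivity) h1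
              _ = 3 * L := by rw [Real.log_pow]; push_cast; ring
          calc ∑ z ∈ S2.image (fun y => x - y), ((1 + latNorm z)^2)⁻¹
              ≤ 2 + 8 * Real.log ((N2:ℝ)+1) := hb
            _ ≤ 2 + 8 * (3*L) := by linarith
            _ ≤ 28 * L := by linarith
        calc ∑ y ∈ S2, vecNorm (gradG G y x - gradG G y 0) ^ 2
            ≤ ∑ y ∈ S2, (2*C^2*((1 + latNorm (x - y))^2)⁻¹ + 2*C^2*((1 + latNorm y)^2)⁻¹) :=
              Finset.sum_le_sum hpt
          _ = 2*C^2 * ∑ y ∈ S2, ((1 + latNorm (x - y))^2)⁻¹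
              + 2*C^2 * ∑ y ∈ S2, ((1 + latNorm y)^2)⁻¹ := by
              rw [Finset.sum_add_distrib, Finset.mul_sum, Finset.mul_sum]
          _ ≤ 2*C^2 * (28*L) + 2*C^2 * (20*L) := by
              have hp' := mul_le_mul_of_nonneg_left hp (by positivity : (0:ℝ) ≤ 2*C^2)
              have hq' := mul_le_mul_of_nonneg_left hq (by positivity : (0:ℝ) ≤ 2*C^2)
              linarith
          _ = 96 * C^2 * L := by ring
      have htot : 36 * C^2 * L + 96 * C^2 * L ≤ 144 * C^2 * L := by nlinarith [sq_nonneg C]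
      calc _ ≤ 36 * C^2 * L + 96 * C^2 * L := add_le_add hfarsum hnearsum
        _ ≤ 144 * C^2 * L := htot
  refine ⟨12 * C, by positivity, ?_⟩
  intro x
  have hL0 : (0:ℝ) ≤ Real.log (1 + latNorm x) :=
    Real.log_nonneg (by linarith [latNorm_nonneg x])
  have ht : (∑' y : Fin 2 → ℤ, vecNorm (gradG G y x - gradG G y 0) ^ 2)
      ≤ 144 * C^2 * Real.log (1 + latNorm x) :=
    tsum_le_of_sum_le' (by positivity) (key x)
  calc Real.sqrt (∑' y : Fin 2 → ℤ, vecNorm (gradG G y x - gradG G y 0) ^ 2)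
      ≤ Real.sqrt (144 * C^2 * Real.log (1 + latNorm x)) := Real.sqrt_le_sqrt ht
    _ = 12 * C * Real.sqrt (Real.log (1 + latNorm x)) := by
        rw [show (144:ℝ) * C^2 * Real.log (1 + latNorm x)
            = (12*C)^2 * Real.log (1 + latNorm x) by ring,
          Real.sqrt_mul (by positivity), Real.sqrt_sq (by positivity)]
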